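/- Evaluations of the eigenvalue formula: with λ(n,ℓ) = 1 − (1/(2κ(1−κ))) ∫_{1−2κ}^{1} s^{2n+ℓ+1} P_ℓ((1−2κ+s²)/((2−2κ)s)) ds, one has: (i) λ(0,1) = κ; (ii) λ(1,0) = 2κ(1−κ); and (iii) for every integer n ≥ 0, λ(n,0) = 1 − (1/(n+1)) · (1−ν^{2n+2})/(1−ν²), where ν = 1−2κ. -/

import Mathlib

/-! For `ℓ = 0, 1` the Legendre polynomial is `1` resp. `X`, so after cancelling the factor `s`
the integrand is a polynomial in `s` and the integrals follow from the power rule; the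
normalisation `2κ(1-κ)` is half of `1 - ν² = 4κ(1-κ)`. -/

open MeasureTheory Real

noncomputable section

/-- The `ℓ`-th Legendre polynomial, via Rodrigues' formula
`P_ℓ(x) = (1/(2^ℓ ℓ!)) (d/dx)^ℓ (x²-1)^ℓ`. -/
noncomputable def legendreP (l : ℕ) : Polynomial ℝ :=
  ((2 ^ l * l.factorial : ℝ)⁻¹) • (Polynomial.derivative^[l] ((Polynomial.X ^ 2 - 1) ^ l))

/-- The eigenvalues `λ(n,ℓ)` of the linear Maxwell-molecules collision operator:
`λ(n,ℓ) = 1 - (1/(2κ(1-κ))) ∫_{1-2κ}^1 s^(2n+ℓ+1) P_ℓ((1-2κ+s²)/((2-2κ)s)) ds`. -/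
noncomputable def lamEV (κ : ℝ) (n l : ℕ) : ℝ :=
  1 - (1 / (2 * κ * (1 - κ))) *
    ∫ s in (1 - 2 * κ)..1,
      s ^ (2 * n + l + 1) * (legendreP l).eval ((1 - 2 * κ + s ^ 2) / ((2 - 2 * κ) * s))

lemma legendreP_zero : legendreP 0 = 1 := by simp [legendreP]

lemma legendreP_one : legendreP 1 = Polynomial.X := by
  simp only [legendreP, pow_one, Nat.factorial_one, Nat.cast_one, mul_one,
    Function.iterate_one, Polynomial.derivative_sub, Polynomial.derivative_X_pow,
    Polynomial.derivative_one, sub_zero]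
  rw [Polynomial.smul_eq_C_mul, Nat.cast_ofNat, ← mul_assoc, ← Polynomial.C_mul]
  norm_num

section Evaluations

variable {κ : ℝ}

lemma one_sub_one_sub_two_mul_sq (κ : ℝ) : 1 - (1 - 2 * κ) ^ 2 = 4 * κ * (1 - κ) := by ring

theorem lamEV_zero_right (hκ₀ : κ ≠ 0) (hκ₁ : 1 - κ ≠ 0) (n : ℕ) :
    lamEV κ n 0 =
      1 - (1 / (n + 1 : ℝ)) * (1 - (1 - 2 * κ) ^ (2 * n + 2)) / (1 - (1 - 2 * κ) ^ 2) := by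
  simp only [lamEV, legendreP_zero, Polynomial.eval_one, mul_one, Nat.add_zero, integral_pow,
    one_sub_one_sub_two_mul_sq]
  push_cast
  field_simp
  ring

lemma lamEV_integrand_one (s : ℝ) :
    s ^ (2 * 0 + 1 + 1) * (legendreP 1).eval ((1 - 2 * κ + s ^ 2) / ((2 - 2 * κ) * s)) =
      (2 - 2 * κ)⁻¹ * ((1 - 2 * κ) * s + s ^ 3) := by
  rw [legendreP_one, Polynomial.eval_X]
  rcases eq_or_ne s 0 with rfl | hs
  · simp
  · field_simp

theorem lamEV_zero_one (hκ₀ : κ ≠ 0) (hκ₁ : 1 - κ ≠ 0) : lamEV κ 0 1 = κ := by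
  have hκ₂ : 2 - 2 * κ ≠ 0 := by
    rw [show 2 - 2 * κ = 2 * (1 - κ) by ring]
    exact mul_ne_zero two_ne_zero hκ₁
  rw [lamEV]
  simp only [lamEV_integrand_one]
  rw [intervalIntegral.integral_const_mul,
    intervalIntegral.integral_add (Continuous.intervalIntegrable (by fun_prop) _ _)
      (Continuous.intervalIntegrable (by fun_prop) _ _),
    intervalIntegral.integral_const_mul, integral_id, integral_pow]
  field_simp
  ring

theorem lamEV_one_zero (hκ₀ : κ ≠ 0) (hκ₁ : 1 - κ ≠ 0) : lamEV κ 1 0 = 2 * κ * (1 - κ) := by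
  rw [lamEV_zero_right hκ₀ hκ₁, one_sub_one_sub_two_mul_sq]
  field_simp
  ring

end Evaluations

/-- Evaluations of the eigenvalue formula:
`λ(0,1) = κ`, `λ(1,0) = 2κ(1-κ)` and `λ(n,0) = 1 - (1/(n+1))(1-ν^(2n+2))/(1-ν²)`
with `ν = 1-2κ`. -/
theorem lamEV_evaluations (κ : ℝ) (hκ : κ ∈ Set.Ioo (0 : ℝ) 1) (ν : ℝ) (hν : ν = 1 - 2 * κ) :
    lamEV κ 0 1 = κ ∧ lamEV κ 1 0 = 2 * κ * (1 - κ) ∧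
      ∀ n : ℕ, lamEV κ n 0 =
        1 - (1 / (n + 1 : ℝ)) * (1 - ν ^ (2 * n + 2)) / (1 - ν ^ 2) := by
  have hκ₀ : κ ≠ 0 := hκ.1.ne'
  have hκ₁ : 1 - κ ≠ 0 := sub_ne_zero.mpr hκ.2.ne'
  subst hν
  exact ⟨lamEV_zero_one hκ₀ hκ₁, lamEV_one_zero hκ₀ hκ₁, lamEV_zero_right hκ₀ hκ₁⟩
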